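/- arXiv:1303.1240 — 4 statements merged into one kernel-verified Lean document; each statement's English description precedes it below -/
import Mathlib

section
/- Let V : ℝ → ℝ satisfy V(x) ≥ (1+δ) log(x²+1) for all x, with δ > 0. Then the function f(x_1,...,x_N) = (1/N)∑_{i=1}^N V(x_i) − (1/N²)∑_{i≠j} log|x_i − x_j| satisfies f(x_1,...,x_N) ≥ −(1+δ) log 2 for all pairwise distinct x_1,...,x_N. -/
open Finset

lemma key_log (a b : ℝ) :
    Real.log |a - b| ≤ (Real.log 2 + Real.log (a ^ 2 + 1) + Real.log (b ^ 2 + 1)) / 2 := by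
  have hprod : (a - b) ^ 2 ≤ 2 * (a ^ 2 + 1) * (b ^ 2 + 1) := by
    nlinarith [sq_nonneg (a + b), sq_nonneg (a * b)]
  have hlog : Real.log ((a - b) ^ 2) ≤ Real.log (2 * (a ^ 2 + 1) * (b ^ 2 + 1)) := by
    rcases eq_or_ne (a - b) 0 with h | h
    · rw [h]
      simp only [ne_eq, OfNat.ofNat_ne_zero, not_false_eq_true, zero_pow, Real.log_zero]
      apply Real.log_nonneg
      nlinarith
    · exact Real.log_le_log (by positivity) hprod
  have hmul : Real.log (2 * (a ^ 2 + 1) * (b ^ 2 + 1))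
      = Real.log 2 + Real.log (a ^ 2 + 1) + Real.log (b ^ 2 + 1) := by
    rw [Real.log_mul (by positivity) (by positivity), Real.log_mul (by norm_num) (by positivity)]
  have habs : Real.log ((a - b) ^ 2) = 2 * Real.log |a - b| := by
    rw [← sq_abs, Real.log_pow]
    push_cast
    ring
  linarith [habs ▸ hlog]

theorem stmt_3 (N : ℕ) (hN : 1 ≤ N) (δ : ℝ) (hδ : 0 < δ) (V : ℝ → ℝ)
    (hV : ∀ x : ℝ, (1 + δ) * Real.log (x ^ 2 + 1) ≤ V x)
    (x : Fin N → ℝ) (hx : Function.Injective x) :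
    -(1 + δ) * Real.log 2 ≤
      (N : ℝ)⁻¹ * ∑ i, V (x i)
        - ((N : ℝ) ^ 2)⁻¹ * ∑ i, ∑ j ∈ Finset.univ.erase i, Real.log |x i - x j| := by
  set n : ℝ := (N : ℝ) with hn
  have hn1 : (1:ℝ) ≤ n := by rw [hn]; exact_mod_cast hN
  have hn0 : (0:ℝ) < n := by linarith
  set c : ℝ := Real.log 2 with hc
  have hc0 : 0 ≤ c := Real.log_nonneg (by norm_num)
  set L : Fin N → ℝ := fun i => Real.log ((x i) ^ 2 + 1) with hL
  set S : ℝ := ∑ i, L i with hS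
  have hLnn : ∀ i, 0 ≤ L i := fun i => Real.log_nonneg (by nlinarith [sq_nonneg (x i)])
  have hSnn : 0 ≤ S := Finset.sum_nonneg fun i _ => hLnn i
  have hVS : (1 + δ) * S ≤ ∑ i, V (x i) := by
    rw [hS, Finset.mul_sum]
    exact Finset.sum_le_sum fun i _ => hV (x i)
  have inner : ∀ i : Fin N, ∑ j ∈ Finset.univ.erase i, ((c + L i + L j) / 2)
      = (n - 1) * (c + L i) / 2 + (S - L i) / 2 := by
    intro i
    have h1 : ∀ j : Fin N, (c + L i + L j) / 2 = (c + L i) / 2 + L j / 2 := fun j => by ring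
    simp_rw [h1, Finset.sum_add_distrib, Finset.sum_const,
      Finset.card_erase_of_mem (Finset.mem_univ i), Finset.card_univ, Fintype.card_fin,
      ← Finset.sum_div, Finset.sum_erase_eq_sub (Finset.mem_univ i)]
    rw [nsmul_eq_mul, Nat.cast_sub hN, ← hS]
    push_cast
    ring
  have hsum : ∑ i, ∑ j ∈ Finset.univ.erase i, Real.log |x i - x j|
      ≤ n * (n - 1) * c / 2 + (n - 1) * S := by
    calc ∑ i, ∑ j ∈ Finset.univ.erase i, Real.log |x i - x j|
        ≤ ∑ i, ∑ j ∈ Finset.univ.erase i, ((c + L i + L j) / 2) := by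
          apply Finset.sum_le_sum
          intro i _
          apply Finset.sum_le_sum
          intro j _
          exact key_log (x i) (x j)
      _ = ∑ i : Fin N, ((n - 1) * (c + L i) / 2 + (S - L i) / 2) := by
          exact Finset.sum_congr rfl fun i _ => inner i
      _ = n * (n - 1) * c / 2 + (n - 1) * S := by
          rw [Finset.sum_add_distrib]
          simp_rw [show ∀ i : Fin N, (n - 1) * (c + L i) / 2
              = (n - 1) * c / 2 + (n - 1) / 2 * L i from fun i => by ring,
            show ∀ i : Fin N, (S - L i) / 2 = S / 2 - L i / 2 from fun i => by ring,
            Finset.sum_add_distrib, Finset.sum_sub_distrib, ← Finset.mul_sum,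
            ← Finset.sum_div, Finset.sum_const, Finset.card_univ, Fintype.card_fin,
            ← hS, nsmul_eq_mul, ← hn]
          ring
  -- final arithmetic
  have hkey : -(1 + δ) * c ≤ n⁻¹ * ((1 + δ) * S)
      - (n ^ 2)⁻¹ * (n * (n - 1) * c / 2 + (n - 1) * S) := by
    have h2 : (0:ℝ) < n ^ 2 := by positivity
    rw [inv_eq_one_div, inv_eq_one_div, div_mul_eq_mul_div, div_mul_eq_mul_div,
      div_sub_div _ _ (ne_of_gt hn0) (ne_of_gt h2), le_div_iff₀ (by positivity)]
    nlinarith [mul_nonneg hSnn hδ.le, mul_nonneg (mul_nonneg hSnn hδ.le) (sq_nonneg n),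
      mul_nonneg hSnn hn0.le, mul_nonneg hc0 hδ.le,
      mul_nonneg (mul_nonneg hc0 hδ.le) (mul_pos (mul_pos hn0 hn0) hn0).le,
      mul_nonneg hc0 (mul_pos (mul_pos hn0 hn0) hn0).le,
      mul_nonneg hSnn (mul_pos hn0 hn0).le, mul_pos hn0 hn0,
      mul_nonneg (mul_nonneg hSnn hδ.le) hn0.le,
      mul_nonneg hc0 (mul_pos hn0 hn0).le, sq_nonneg (n - 1),
      mul_nonneg hc0 (mul_nonneg (mul_pos hn0 hn0).le (sub_nonneg.2 hn1))]
  calc -(1 + δ) * Real.log 2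
      ≤ n⁻¹ * ((1 + δ) * S) - (n ^ 2)⁻¹ * (n * (n - 1) * c / 2 + (n - 1) * S) := hkey
    _ ≤ n⁻¹ * ∑ i, V (x i)
        - (n ^ 2)⁻¹ * ∑ i, ∑ j ∈ Finset.univ.erase i, Real.log |x i - x j| := by
        have h2 : (0:ℝ) ≤ (n ^ 2)⁻¹ := by positivity
        have h3 : (0:ℝ) ≤ n⁻¹ := by positivity
        gcongr
end

section
/- Let V : ℝ → ℝ satisfy V(x) ≥ (1+δ)log(x²+1) with δ > 0, and let f(x) = (1/N)∑_i V(x_i) − (1/N²)∑_{i≠j} log|x_i−x_j| with C := −2(1+δ)log 2. Then for every pair i ≠ j of indices and pairwise distinct x_1,...,x_N, one has −(1/N²) log|x_i − x_j| ≤ f(x_1,...,x_N) − C. -/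
open Finset

lemma log_nonneg_sq (a : ℝ) : 0 ≤ Real.log (a ^ 2 + 1) :=
  Real.log_nonneg (by nlinarith [sq_nonneg a])

lemma key_log_bound (a b : ℝ) :
    Real.log |a - b| ≤ 1/2 * Real.log (a ^ 2 + 1) + 1/2 * Real.log (b ^ 2 + 1)
      + 1/2 * Real.log 2 := by
  have h2 : (0:ℝ) ≤ Real.log 2 := Real.log_nonneg (by norm_num)
  rcases eq_or_ne a b with h | h
  · simp only [h, sub_self, abs_zero, Real.log_zero]
    nlinarith [log_nonneg_sq a, log_nonneg_sq b]
  · have hab : 0 < |a - b| := abs_pos.2 (sub_ne_zero.2 h)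
    have h1 : |a - b| ^ 2 ≤ 2 * ((a ^ 2 + 1) * (b ^ 2 + 1)) := by
      rw [sq_abs]; nlinarith [sq_nonneg (a + b), sq_nonneg (a * b)]
    have hlog : Real.log (|a - b| ^ 2) ≤ Real.log (2 * ((a ^ 2 + 1) * (b ^ 2 + 1))) :=
      Real.log_le_log (by positivity) h1
    rw [Real.log_pow, Real.log_mul (by norm_num) (by positivity),
      Real.log_mul (by positivity) (by positivity)] at hlog
    push_cast at hlog
    linarith

theorem stmt_4 (N : ℕ) (hN : 2 ≤ N) (δ : ℝ) (hδ : 0 < δ) (V : ℝ → ℝ)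
    (hV : ∀ x : ℝ, (1 + δ) * Real.log (x ^ 2 + 1) ≤ V x)
    (x : Fin N → ℝ) (hx : Function.Injective x) (i j : Fin N) (hij : i ≠ j) :
    -(((N : ℝ) ^ 2)⁻¹) * Real.log |x i - x j| ≤
      ((N : ℝ)⁻¹ * ∑ k, V (x k)
        - ((N : ℝ) ^ 2)⁻¹ * ∑ k, ∑ l ∈ Finset.univ.erase k, Real.log |x k - x l|)
      - (-2 * (1 + δ) * Real.log 2) := by
  set n : ℝ := (N : ℝ) with hn
  have hn2 : (2:ℝ) ≤ n := by rw [hn]; exact_mod_cast hN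
  have hn0 : (0:ℝ) < n := by linarith
  have hl2 : (0:ℝ) ≤ Real.log 2 := Real.log_nonneg (by norm_num)
  set A : ℝ := ∑ k, Real.log (x k ^ 2 + 1) with hA
  have hA0 : 0 ≤ A := Finset.sum_nonneg fun k _ => log_nonneg_sq (x k)
  set g : Fin N → Fin N → ℝ := fun k l => Real.log |x k - x l| with hg
  set h : Fin N → Fin N → ℝ := fun k l =>
    1/2 * Real.log (x k ^ 2 + 1) + 1/2 * Real.log (x l ^ 2 + 1) + 1/2 * Real.log 2 with hh
  have hgh : ∀ k l : Fin N, g k l ≤ h k l := fun k l => key_log_bound (x k) (x l)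
  set S : ℝ := ∑ k, ∑ l ∈ Finset.univ.erase k, g k l with hS
  set T : ℝ := ∑ k, ∑ l ∈ Finset.univ.erase k, h k l with hT
  -- T computed exactly
  have hcard : ∀ k : Fin N, ((Finset.univ.erase k).card : ℝ) = n - 1 := by
    intro k
    rw [Finset.card_erase_of_mem (Finset.mem_univ k), Finset.card_univ, Fintype.card_fin,
      Nat.cast_sub (by omega : 1 ≤ N), Nat.cast_one, hn]
  have hTval : T = (n - 1) * A + n * (n - 1) / 2 * Real.log 2 := by
    have hinner : ∀ k : Fin N, ∑ l ∈ Finset.univ.erase k, h k l =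
        (n - 2)/2 * Real.log (x k ^ 2 + 1) + (A/2 + (n - 1)/2 * Real.log 2) := by
      intro k
      rw [hh]
      simp only [Finset.sum_add_distrib, Finset.sum_const, nsmul_eq_mul]
      rw [← Finset.mul_sum, Finset.sum_erase_eq_sub (Finset.mem_univ k), hcard, ← hA]
      ring
    rw [hT, Finset.sum_congr rfl fun k _ => hinner k, Finset.sum_add_distrib,
      ← Finset.mul_sum, ← hA, Finset.sum_const, Finset.card_univ, Fintype.card_fin,
      nsmul_eq_mul, ← hn]
    ring
  -- S - g i j ≤ T - h i j
  have hji : j ∈ Finset.univ.erase i := Finset.mem_erase.2 ⟨hij.symm, Finset.mem_univ j⟩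
  have hsplit : ∀ f : Fin N → Fin N → ℝ,
      ∑ k, ∑ l ∈ Finset.univ.erase k, f k l =
        (∑ k ∈ Finset.univ.erase i, ∑ l ∈ Finset.univ.erase k, f k l)
          + ((∑ l ∈ (Finset.univ.erase i).erase j, f i l) + f i j) := by
    intro f
    rw [Finset.sum_erase_add (Finset.univ.erase i) _ hji,
      Finset.sum_erase_add Finset.univ _ (Finset.mem_univ i)]
  have hST : S - g i j ≤ T - h i j := by
    rw [hS, hT, hsplit g, hsplit h]
    have h1 : (∑ k ∈ Finset.univ.erase i, ∑ l ∈ Finset.univ.erase k, g k l) ≤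
        ∑ k ∈ Finset.univ.erase i, ∑ l ∈ Finset.univ.erase k, h k l :=
      Finset.sum_le_sum fun k _ => Finset.sum_le_sum fun l _ => hgh k l
    have h2 : (∑ l ∈ (Finset.univ.erase i).erase j, g i l) ≤
        ∑ l ∈ (Finset.univ.erase i).erase j, h i l :=
      Finset.sum_le_sum fun l _ => hgh i l
    linarith
  have hh0 : 0 ≤ h i j := by
    have := log_nonneg_sq (x i); have := log_nonneg_sq (x j)
    simp only [hh]; linarith
  have hSg : S - g i j ≤ (n - 1) * A + n * (n - 1) / 2 * Real.log 2 := by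
    rw [← hTval]; linarith
  have hVA : (1 + δ) * A ≤ ∑ k, V (x k) := by
    rw [hA, Finset.mul_sum]
    exact Finset.sum_le_sum fun k _ => hV (x k)
  -- main inequality multiplied by n^2
  have hmain : -(g i j) ≤ n * (∑ k, V (x k)) - S + 2 * n ^ 2 * (1 + δ) * Real.log 2 := by
    have hnV : n * ((1 + δ) * A) ≤ n * (∑ k, V (x k)) :=
      mul_le_mul_of_nonneg_left hVA (le_of_lt hn0)
    nlinarith [mul_nonneg hA0 (show (0:ℝ) ≤ n * (1 + δ) - (n - 1) by nlinarith),
      mul_nonneg hl2 (show (0:ℝ) ≤ 2 * n ^ 2 * (1 + δ) - n * (n - 1) / 2 by nlinarith)]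
  -- convert back
  calc -(((N:ℝ) ^ 2)⁻¹) * Real.log |x i - x j| = (n ^ 2)⁻¹ * (-(g i j)) := by
        rw [hg, ← hn]; ring
    _ ≤ (n ^ 2)⁻¹ * (n * (∑ k, V (x k)) - S + 2 * n ^ 2 * (1 + δ) * Real.log 2) :=
        mul_le_mul_of_nonneg_left hmain (by positivity)
    _ = (n⁻¹ * ∑ k, V (x k) - (n ^ 2)⁻¹ * S) - (-2 * (1 + δ) * Real.log 2) := by
        field_simp
        ring
end

section
/- Let c < −2 and set a² = −2 − c, b² = 2 − c with a, b > 0. Then the function ρ(x) = (1/(2π)) |x| √((x²−a²)(b²−x²)) for a < |x| < b and ρ(x) = 0 otherwise, is nonnegative and integrates to 1 over ℝ. -/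
open MeasureTheory

theorem stmt_7 (c : ℝ) (hc : c < -2) :
    let a := Real.sqrt (-2 - c)
    let b := Real.sqrt (2 - c)
    let ρ : ℝ → ℝ := fun x =>
      if a < |x| ∧ |x| < b then
        (2 * Real.pi)⁻¹ * |x| * Real.sqrt ((x ^ 2 - a ^ 2) * (b ^ 2 - x ^ 2))
      else 0
    (∀ x, 0 ≤ ρ x) ∧ (∫ x, ρ x) = 1 := by
  intro a b ρ
  have h2c : (0:ℝ) < -2 - c := by linarith
  have ha2 : a ^ 2 = -2 - c := Real.sq_sqrt h2c.le
  have hb2 : b ^ 2 = 2 - c := Real.sq_sqrt (by linarith)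
  have ha : 0 < a := Real.sqrt_pos.mpr h2c
  have hab : a < b := Real.sqrt_lt_sqrt h2c.le (by linarith)
  constructor
  · intro x
    simp only [ρ]
    split
    · positivity
    · exact le_refl 0
  · set g : ℝ → ℝ := fun t =>
      if a < t ∧ t < b then (2 * Real.pi)⁻¹ * t * Real.sqrt ((t ^ 2 - a ^ 2) * (b ^ 2 - t ^ 2))
      else 0 with hg
    have hρ : ρ = fun x => g |x| := by
      funext x
      simp only [ρ, g, sq_abs]
    have hg0 : ∀ x ∉ Set.Ioo a b, g x = 0 := by
      intro x hx
      simp only [Set.mem_Ioo, not_and_or, not_lt] at hx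
      simp only [g]
      rw [if_neg]
      rintro ⟨h1, h2⟩
      rcases hx with h | h
      · exact absurd h1 (not_lt.mpr h)
      · exact absurd h2 (not_lt.mpr h)
    have h1 : ∫ x in Set.Ioi (0:ℝ), g x = ∫ x, g x :=
      setIntegral_eq_integral_of_forall_compl_eq_zero (fun x hx => hg0 x (by
        intro h
        exact hx (Set.mem_Ioi.mpr (lt_trans ha h.1))))
    have h2 : ∫ x in Set.Ioo a b, g x = ∫ x, g x :=
      setIntegral_eq_integral_of_forall_compl_eq_zero hg0
    have hsqrt4 : Real.sqrt 4 = 2 := by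
      rw [show (4:ℝ) = 2 ^ 2 by norm_num, Real.sqrt_sq (by norm_num)]
    have key : ∀ x : ℝ, (2 * Real.pi)⁻¹ * x * Real.sqrt ((x ^ 2 - a ^ 2) * (b ^ 2 - x ^ 2))
        = ((fun u => (2 * Real.pi)⁻¹ * (2 * Real.sqrt (1 - u ^ 2))) ∘
            (fun x => (x ^ 2 + c) / 2)) x * x := by
      intro x
      have h4 : (x ^ 2 - a ^ 2) * (b ^ 2 - x ^ 2) = 4 * (1 - ((x ^ 2 + c) / 2) ^ 2) := by
        rw [ha2, hb2]; ring
      rw [h4, Real.sqrt_mul (by norm_num), hsqrt4]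
      simp only [Function.comp]
      ring
    have hderiv : ∀ x ∈ Set.uIcc a b, HasDerivAt (fun x : ℝ => (x ^ 2 + c) / 2) x x := by
      intro x _
      have h := ((hasDerivAt_pow 2 x).add_const c).div_const 2
      simpa using h
    have hgc : Continuous (fun u : ℝ => (2 * Real.pi)⁻¹ * (2 * Real.sqrt (1 - u ^ 2))) := by
      fun_prop
    have hsub : ∫ x in a..b, (2 * Real.pi)⁻¹ * x *
        Real.sqrt ((x ^ 2 - a ^ 2) * (b ^ 2 - x ^ 2))
        = ∫ u in ((a ^ 2 + c) / 2)..((b ^ 2 + c) / 2),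
            (2 * Real.pi)⁻¹ * (2 * Real.sqrt (1 - u ^ 2)) := by
      simp only [key]
      exact intervalIntegral.integral_comp_mul_deriv hderiv continuous_id.continuousOn hgc
    have hfa : (a ^ 2 + c) / 2 = -1 := by rw [ha2]; ring
    have hfb : (b ^ 2 + c) / 2 = 1 := by rw [hb2]; ring
    have hIoo : ∫ x in Set.Ioo a b, g x
        = ∫ x in a..b, (2 * Real.pi)⁻¹ * x *
            Real.sqrt ((x ^ 2 - a ^ 2) * (b ^ 2 - x ^ 2)) := by
      rw [intervalIntegral.integral_of_le hab.le, integral_Ioc_eq_integral_Ioo]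
      refine setIntegral_congr_fun measurableSet_Ioo (fun x hx => ?_)
      simp only [g]
      rw [if_pos ⟨hx.1, hx.2⟩]
    have hval : ∫ u in (-1:ℝ)..1, (2 * Real.pi)⁻¹ * (2 * Real.sqrt (1 - u ^ 2))
        = (2 * Real.pi)⁻¹ * 2 * (Real.pi / 2) := by
      have : (fun u : ℝ => (2 * Real.pi)⁻¹ * (2 * Real.sqrt (1 - u ^ 2)))
          = fun u : ℝ => ((2 * Real.pi)⁻¹ * 2) * Real.sqrt (1 - u ^ 2) := by
        funext u; ring
      rw [this, intervalIntegral.integral_const_mul, integral_sqrt_one_sub_sq]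
    rw [hρ, integral_comp_abs (f := g), h1, ← h2, hIoo, hsub, hfa, hfb, hval]
    have hπ : Real.pi ≠ 0 := Real.pi_ne_zero
    field_simp
end

section
/- Let ρ be the semicircle density ρ(x) = (1/(2π))√(4 − x²) on [−2, 2]. Then its Hilbert transform satisfies Hρ(x) := p.v. ∫ ρ(y)/(x − y) dy = x/2 for all x ∈ (−2, 2), i.e. the semicircle law solves the Euler–Lagrange equation Hμ_V = V'/2 for V(x) = x²/2. -/
/-!
For `|x| < 2` the kernel splits as
`√(4 - y²) / (x - y) = (x + y) / √(4 - y²) + (4 - x²) / ((x - y) √(4 - y²))`,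
which has the explicit primitive `regularPart x y - √(4 - x²) log |y - x|`, where `regularPart x`
is continuous on `[-2, 2]`. Over `[-2, x - ε] ∪ [x + ε, 2]` the logarithmic terms at `x ∓ ε`
cancel, the endpoint values contribute `π x`, and what remains,
`regularPart x (x - ε) - regularPart x (x + ε)`, tends to `0` with `ε`.
-/

open MeasureTheory Filter Real Set

namespace SemicircleHilbert

lemma four_sub_sq_pos {y : ℝ} (hy : |y| < 2) : 0 < 4 - y ^ 2 := by
  nlinarith [sq_abs y, abs_nonneg y]

lemma mul_lt_four {x y : ℝ} (hx : |x| < 2) (hy : |y| ≤ 2) : x * y < 4 := by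
  nlinarith [abs_mul_abs_self x, abs_mul x y, le_abs_self (x * y), abs_nonneg x, abs_nonneg y]

lemma hasDerivAt_sqrt_four_sub_sq {y : ℝ} (hy : |y| < 2) :
    HasDerivAt (fun t => √(4 - t ^ 2)) (-y / √(4 - y ^ 2)) y := by
  refine (((hasDerivAt_pow 2 y).const_sub 4).sqrt (four_sub_sq_pos hy).ne').congr_deriv ?_
  field_simp
  ring

lemma hasDerivAt_arcsin_half_sub_sqrt (x : ℝ) {y : ℝ} (hy : |y| < 2) :
    HasDerivAt (fun t => x * arcsin (t / 2) - √(4 - t ^ 2)) ((x + y) / √(4 - y ^ 2)) y := by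
  have hr : 0 < √(4 - y ^ 2) := sqrt_pos.2 (four_sub_sq_pos hy)
  obtain ⟨hy₁, hy₂⟩ := abs_lt.1 hy
  have harcsin : HasDerivAt (fun t => arcsin (t / 2)) (1 / √(4 - y ^ 2)) y := by
    have hsqrt : √(1 - (y / 2) ^ 2) = √(4 - y ^ 2) / 2 := by
      rw [show 1 - (y / 2) ^ 2 = (4 - y ^ 2) / 2 ^ 2 by ring, sqrt_div' _ (by positivity),
        sqrt_sq (by norm_num)]
    refine ((hasDerivAt_arcsin (x := y / 2) (by linarith) (by linarith)).comp y
      ((hasDerivAt_id y).div_const 2)).congr_deriv ?_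
    rw [hsqrt]
    field_simp
  refine ((harcsin.const_mul x).sub (hasDerivAt_sqrt_four_sub_sq hy)).congr_deriv ?_
  ring

lemma hasDerivAt_log_sub_log {x y : ℝ} (hx : |x| < 2) (hy : |y| < 2) (hxy : y ≠ x) :
    HasDerivAt (fun t => log (4 - x * t + √(4 - x ^ 2) * √(4 - t ^ 2)) - log (t - x))
      (√(4 - x ^ 2) / ((x - y) * √(4 - y ^ 2))) y := by
  have hr : 0 < √(4 - y ^ 2) := sqrt_pos.2 (four_sub_sq_pos hy)
  have hv : 0 < 4 - x * y + √(4 - x ^ 2) * √(4 - y ^ 2) := by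
    nlinarith [mul_lt_four hx hy.le, mul_nonneg (sqrt_nonneg (4 - x ^ 2)) hr.le]
  have hlog₁ := ((((hasDerivAt_id y).const_mul x).const_sub 4).add
    ((hasDerivAt_sqrt_four_sub_sq hy).const_mul √(4 - x ^ 2))).log hv.ne'
  have hlog₂ := ((hasDerivAt_id y).sub_const x).log (sub_ne_zero.2 hxy)
  refine (hlog₁.sub hlog₂).congr_deriv ?_
  have hxy' : x - y ≠ 0 := sub_ne_zero.2 hxy.symm
  have hyx : y - x ≠ 0 := sub_ne_zero.2 hxy
  simp only [Pi.add_apply, id_eq, mul_one]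
  field_simp
  linear_combination √(4 - x ^ 2) * (y - x) * sq_sqrt (four_sub_sq_pos hy).le
    + (√(4 - y ^ 2) * (x - y)) * sq_sqrt (four_sub_sq_pos hx).le

noncomputable def regularPart (x y : ℝ) : ℝ :=
  x * arcsin (y / 2) - √(4 - y ^ 2) + √(4 - x ^ 2) * log (4 - x * y + √(4 - x ^ 2) * √(4 - y ^ 2))

/-- `Real.log` is even, so the last term is `√(4 - x²) log |y - x|`. -/
noncomputable def primitive (x y : ℝ) : ℝ :=
  regularPart x y - √(4 - x ^ 2) * log (y - x)

lemma hasDerivAt_primitive {x y : ℝ} (hx : |x| < 2) (hy : |y| < 2) (hxy : y ≠ x) :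
    HasDerivAt (primitive x) (√(4 - y ^ 2) / (x - y)) y := by
  have hr : 0 < √(4 - y ^ 2) := sqrt_pos.2 (four_sub_sq_pos hy)
  have hxy' : x - y ≠ 0 := sub_ne_zero.2 hxy.symm
  have h := (hasDerivAt_arcsin_half_sub_sqrt x hy).add
    ((hasDerivAt_log_sub_log hx hy hxy).const_mul √(4 - x ^ 2))
  refine (h.congr_deriv ?_).congr_of_eventuallyEq (.of_forall fun t => ?_)
  · field_simp
    linear_combination sq_sqrt (four_sub_sq_pos hx).le - sq_sqrt (four_sub_sq_pos hy).le
  · simp only [primitive, regularPart, Pi.add_apply]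
    ring

lemma continuousOn_regularPart {x : ℝ} (hx : |x| < 2) :
    ContinuousOn (regularPart x) (Icc (-2) 2) := by
  refine ((by fun_prop : Continuous fun y => x * arcsin (y / 2) - √(4 - y ^ 2)).continuousOn).add
    (continuousOn_const.mul (ContinuousOn.log (by fun_prop) fun y hy => ?_))
  nlinarith [mul_lt_four hx (abs_le.2 hy),
    mul_nonneg (sqrt_nonneg (4 - x ^ 2)) (sqrt_nonneg (4 - y ^ 2))]

lemma integrableOn_sqrt_four_sub_sq_div_sub {x a b : ℝ} (hxab : x ∉ Icc a b) :
    IntegrableOn (fun y => √(4 - y ^ 2) / (x - y)) (Icc a b) :=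
  ContinuousOn.integrableOn_Icc (ContinuousOn.div (by fun_prop) (by fun_prop)
    fun y hy => sub_ne_zero.2 fun h => hxab (h ▸ hy))

lemma setIntegral_Icc_eq_primitive_sub {x a b : ℝ} (hx : |x| < 2) (hab : a ≤ b) (ha : -2 ≤ a)
    (hb : b ≤ 2) (hxab : x ∉ Icc a b) :
    ∫ y in Icc a b, √(4 - y ^ 2) / (x - y) = primitive x b - primitive x a := by
  rw [integral_Icc_eq_integral_Ioc, ← intervalIntegral.integral_of_le hab]
  have hne : ∀ y ∈ Icc a b, y - x ≠ 0 := fun y hy h => hxab (sub_eq_zero.1 h ▸ hy)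
  refine intervalIntegral.integral_eq_sub_of_hasDerivAt_of_le hab ?_ (fun y hy => ?_)
    ((intervalIntegrable_iff_integrableOn_Icc_of_le hab).2
      (integrableOn_sqrt_four_sub_sq_div_sub hxab))
  · exact ((continuousOn_regularPart hx).mono (Icc_subset_Icc ha hb)).sub
      (continuousOn_const.mul ((continuousOn_id.sub continuousOn_const).log hne))
  · exact hasDerivAt_primitive hx (abs_lt.2 ⟨by linarith [hy.1], by linarith [hy.2]⟩)
      fun h => hxab (h ▸ Ioo_subset_Icc_self hy)

lemma primitive_two_sub_primitive_neg_two {x : ℝ} (hx : |x| < 2) :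
    primitive x 2 - primitive x (-2) = π * x := by
  obtain ⟨hx₁, hx₂⟩ := abs_lt.1 hx
  have h₁ : log (4 - x * 2) = log 2 + log (2 - x) := by
    rw [show 4 - x * 2 = 2 * (2 - x) by ring, log_mul two_ne_zero (by linarith)]
  have h₂ : log (4 - x * -2) = log 2 + log (-2 - x) := by
    rw [show 4 - x * -2 = 2 * -(-2 - x) by ring, log_mul two_ne_zero (by linarith), log_neg_eq_log]
  have h₃ : √(4 - (2 : ℝ) ^ 2) = 0 := by norm_num
  have h₄ : √(4 - (-2 : ℝ) ^ 2) = 0 := by norm_num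
  simp only [primitive, regularPart, h₃, h₄, mul_zero, add_zero, h₁, h₂]
  norm_num
  ring

lemma setOf_le_abs_sub_inter_Icc {x ε a b : ℝ} (ha : a ≤ x + ε) (hb : x - ε ≤ b) :
    {y : ℝ | ε ≤ |x - y|} ∩ Icc a b = Icc a (x - ε) ∪ Icc (x + ε) b := by
  ext y
  simp only [mem_inter_iff, mem_ofPred_eq, mem_union, mem_Icc, le_abs]
  constructor
  · rintro ⟨h | h, hay, hyb⟩
    · exact .inl ⟨hay, by linarith⟩
    · exact .inr ⟨by linarith, hyb⟩
  · rintro (⟨hay, h⟩ | ⟨h, hyb⟩)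
    · exact ⟨.inl (by linarith), hay, by linarith⟩
    · exact ⟨.inr (by linarith), by linarith, hyb⟩

lemma truncatedIntegral_eq {x ε : ℝ} (hx : |x| < 2) (hε : 0 < ε) (hε₁ : ε ≤ x + 2)
    (hε₂ : ε ≤ 2 - x) :
    ∫ y in {y : ℝ | ε ≤ |x - y|}, (if |y| ≤ 2 then √(4 - y ^ 2) / (2 * π) else 0) / (x - y)
      = (π * x + regularPart x (x - ε) - regularPart x (x + ε)) / (2 * π) := by
  have hxA : x ∉ Icc (-2) (x - ε) := fun h => by linarith [h.2]
  have hxB : x ∉ Icc (x + ε) 2 := fun h => by linarith [h.1]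
  have hindicator : (fun y => (if |y| ≤ 2 then √(4 - y ^ 2) / (2 * π) else 0) / (x - y))
      = (Icc (-2) 2).indicator fun y => √(4 - y ^ 2) / (x - y) / (2 * π) := by
    ext y
    simp only [indicator_apply, mem_Icc, ← abs_le]
    split_ifs <;> ring
  rw [hindicator, setIntegral_indicator measurableSet_Icc,
    setOf_le_abs_sub_inter_Icc (by linarith) (by linarith), integral_div,
    setIntegral_union (disjoint_left.2 fun y hA hB => by linarith [hA.2, hB.1]) measurableSet_Icc
      (integrableOn_sqrt_four_sub_sq_div_sub hxA) (integrableOn_sqrt_four_sub_sq_div_sub hxB),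
    setIntegral_Icc_eq_primitive_sub hx (by linarith) le_rfl (by linarith) hxA,
    setIntegral_Icc_eq_primitive_sub hx (by linarith) (by linarith) le_rfl hxB,
    ← primitive_two_sub_primitive_neg_two hx]
  simp only [primitive, show x - ε - x = -ε by ring, show x + ε - x = ε by ring, log_neg_eq_log]
  ring

lemma tendsto_regularPart_sub_regularPart {x : ℝ} (hx : |x| < 2) :
    Tendsto (fun ε => (π * x + regularPart x (x - ε) - regularPart x (x + ε)) / (2 * π))
      (nhds 0) (nhds (x / 2)) := by
  have hR : ContinuousAt (regularPart x) x :=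
    (continuousOn_regularPart hx).continuousAt (Icc_mem_nhds (abs_lt.1 hx).1 (abs_lt.1 hx).2)
  have h := ((tendsto_const_nhds (x := π * x)).add
    (hR.tendsto.comp ((continuous_sub_left x).tendsto' 0 x (sub_zero x)))).sub
    (hR.tendsto.comp ((continuous_const_add x).tendsto' 0 x (add_zero x)))
  have hval : (π * x + regularPart x x - regularPart x x) / (2 * π) = x / 2 := by
    field_simp
    ring
  exact hval ▸ h.div_const (2 * π)

end SemicircleHilbert

open SemicircleHilbert in
/-- The Hilbert transform (principal value) of the semicircle density equals `x/2`
on `(-2, 2)`: the semicircle law solves the Euler–Lagrange equation for `V(x) = x²/2`. -/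
theorem stmt_14 :
    ∀ x ∈ Set.Ioo (-2 : ℝ) 2,
      Tendsto
        (fun ε : ℝ =>
          ∫ y in {y : ℝ | ε ≤ |x - y|},
            (if |y| ≤ 2 then Real.sqrt (4 - y ^ 2) / (2 * Real.pi) else 0) / (x - y))
        (nhdsWithin 0 (Set.Ioi 0)) (nhds (x / 2)) := by
  rintro x ⟨hx₁, hx₂⟩
  have hx : |x| < 2 := abs_lt.2 ⟨hx₁, hx₂⟩
  refine ((tendsto_regularPart_sub_regularPart hx).mono_left nhdsWithin_le_nhds).congr' ?_
  filter_upwards [Ioo_mem_nhdsGT (lt_min (by linarith : 0 < x + 2) (by linarith : 0 < 2 - x))]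
    with ε ⟨hε, hεmin⟩
  exact (truncatedIntegral_eq hx hε (hεmin.le.trans (min_le_left _ _))
    (hεmin.le.trans (min_le_right _ _))).symm
end
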